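/- Let W be a normed module over a unital normed ring, u ∈ W with ‖u‖ = 1, and let c(h), c(Ih), T₁ := c(t₁), T₂ := c(t₂) be Clifford multiplications by vectors h, Ih, t₁, t₂ in a real inner product space V, with h ⊥ Ih and ‖h‖ = ‖Ih‖. If T₁c(h)u + T₂c(Ih)u = 0 then ‖t₁‖‖h‖ = ‖t₂‖‖Ih‖, hence ‖t₁‖ = ‖t₂‖; and moreover multiplying by c(t₁)c(Ih) + c(t₂)c(h) yields ⟨t₁, t₂⟩ = 0. -/

import Mathlib

open scoped RealInnerProductSpace

/-!
Polarising `c(v)² = -‖v‖²` with the skew-symmetry of `c` gives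
`⟪c v x, c w x⟫ = ⟪v, w⟫ ⟪x, x⟫`, so each `c v` is `‖v‖` times an isometry and Clifford
multiplications by orthogonal vectors send `x` to orthogonal vectors.
Taking norms in `c t₁ x = -c t₂ y`, with `x = c h u` and `y = c h' u`, gives the norm identity.
Pairing that equation with `c t₂ x` gives
`⟪t₁, t₂⟫ ‖x‖² = -‖t₂‖² ⟪y, x⟫ = 0`.
-/

section Clifford

variable {V W : Type*} [NormedAddCommGroup V] [InnerProductSpace ℝ V]
  [NormedAddCommGroup W] [InnerProductSpace ℝ W] {c : V → W →ₗ[ℝ] W}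

theorem LinearMap.inner_map_eq_neg_inner_of_adjoint_eq_neg [FiniteDimensional ℝ W]
    {f : W →ₗ[ℝ] W} (hf : LinearMap.adjoint f = -f) (x y : W) :
    ⟪f x, y⟫ = -⟪x, f y⟫ := by
  rw [← LinearMap.adjoint_inner_left, hf, LinearMap.neg_apply, inner_neg_left, neg_neg]

theorem clifford_apply_add_apply
    (hClif : ∀ v w : V, c v ∘ₗ c w + c w ∘ₗ c v = (-2 * ⟪v, w⟫) • LinearMap.id)
    (v w : V) (x : W) : c v (c w x) + c w (c v x) = (-2 * ⟪v, w⟫) • x := by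
  simpa using LinearMap.congr_fun (hClif v w) x

theorem inner_clifford_apply_add_inner_clifford_apply_swap
    (hClif : ∀ v w : V, c v ∘ₗ c w + c w ∘ₗ c v = (-2 * ⟪v, w⟫) • LinearMap.id)
    (hskew : ∀ (v : V) (x y : W), ⟪c v x, y⟫ = -⟪x, c v y⟫) (v w : V) (x y : W) :
    ⟪c v x, c w y⟫ + ⟪c w x, c v y⟫ = 2 * ⟪v, w⟫ * ⟪x, y⟫ := by
  rw [hskew, hskew, ← neg_add, ← inner_add_right, clifford_apply_add_apply hClif,
    real_inner_smul_right]
  ring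

theorem inner_clifford_apply_apply
    (hClif : ∀ v w : V, c v ∘ₗ c w + c w ∘ₗ c v = (-2 * ⟪v, w⟫) • LinearMap.id)
    (hskew : ∀ (v : V) (x y : W), ⟪c v x, y⟫ = -⟪x, c v y⟫) (v w : V) (x : W) :
    ⟪c v x, c w x⟫ = ⟪v, w⟫ * ⟪x, x⟫ := by
  have hpol := inner_clifford_apply_add_inner_clifford_apply_swap hClif hskew v w x x
  rw [real_inner_comm (c v x) (c w x)] at hpol
  linarith

theorem inner_clifford_map_map
    (hClif : ∀ v w : V, c v ∘ₗ c w + c w ∘ₗ c v = (-2 * ⟪v, w⟫) • LinearMap.id)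
    (hskew : ∀ (v : V) (x y : W), ⟪c v x, y⟫ = -⟪x, c v y⟫) (v : V) (x y : W) :
    ⟪c v x, c v y⟫ = ⟪v, v⟫ * ⟪x, y⟫ := by
  have hpol := inner_clifford_apply_add_inner_clifford_apply_swap hClif hskew v v x y
  linarith

theorem norm_clifford_apply
    (hClif : ∀ v w : V, c v ∘ₗ c w + c w ∘ₗ c v = (-2 * ⟪v, w⟫) • LinearMap.id)
    (hskew : ∀ (v : V) (x y : W), ⟪c v x, y⟫ = -⟪x, c v y⟫) (v : V) (x : W) :
    ‖c v x‖ = ‖v‖ * ‖x‖ := by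
  have hsq := inner_clifford_apply_apply hClif hskew v v x
  simp only [real_inner_self_eq_norm_sq, ← mul_pow] at hsq
  exact (pow_left_inj₀ (norm_nonneg _) (by positivity) two_ne_zero).mp hsq

theorem norm_mul_norm_eq_of_clifford_apply_add_eq_zero
    (hClif : ∀ v w : V, c v ∘ₗ c w + c w ∘ₗ c v = (-2 * ⟪v, w⟫) • LinearMap.id)
    (hskew : ∀ (v : V) (x y : W), ⟪c v x, y⟫ = -⟪x, c v y⟫) {a b : V} {x y : W}
    (hab : c a x + c b y = 0) : ‖a‖ * ‖x‖ = ‖b‖ * ‖y‖ := by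
  rw [← norm_clifford_apply hClif hskew, ← norm_clifford_apply hClif hskew,
    eq_neg_of_add_eq_zero_left hab, norm_neg]

theorem inner_eq_zero_of_clifford_apply_add_eq_zero
    (hClif : ∀ v w : V, c v ∘ₗ c w + c w ∘ₗ c v = (-2 * ⟪v, w⟫) • LinearMap.id)
    (hskew : ∀ (v : V) (x y : W), ⟪c v x, y⟫ = -⟪x, c v y⟫) {a b : V} {x y : W}
    (hab : c a x + c b y = 0) (hxy : ⟪x, y⟫ = 0) (hx : x ≠ 0) : ⟪a, b⟫ = 0 := by
  have hyx : ⟪c b y, c b x⟫ = 0 := by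
    rw [inner_clifford_map_map hClif hskew, real_inner_comm x, hxy, mul_zero]
  have key : ⟪a, b⟫ * ⟪x, x⟫ = 0 := by
    rw [← inner_clifford_apply_apply hClif hskew, eq_neg_of_add_eq_zero_left hab,
      inner_neg_left, hyx, neg_zero]
  exact (mul_eq_zero.mp key).resolve_right (inner_self_ne_zero.mpr hx)

end Clifford

theorem clifford_equation_forces_equal_norms_and_orthogonality
    {V W : Type*} [NormedAddCommGroup V] [InnerProductSpace ℝ V]
    [NormedAddCommGroup W] [InnerProductSpace ℝ W] [FiniteDimensional ℝ W]
    (c : V → (W →ₗ[ℝ] W))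
    (hClif : ∀ v w : V, c v ∘ₗ c w + c w ∘ₗ c v = (-2 * ⟪v, w⟫) • LinearMap.id)
    (hskew : ∀ v : V, LinearMap.adjoint (c v) = -(c v))
    (h h' t₁ t₂ : V)
    (hortho : ⟪h, h'⟫ = 0) (hnorm : ‖h‖ = ‖h'‖) (hh : h ≠ 0)
    (u : W) (hu : ‖u‖ = 1)
    (heq : c t₁ (c h u) + c t₂ (c h' u) = 0) :
    ‖t₁‖ * ‖h‖ = ‖t₂‖ * ‖h'‖ ∧ ‖t₁‖ = ‖t₂‖ ∧ ⟪t₁, t₂⟫ = 0 := by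
  have hskew' : ∀ (v : V) (x y : W), ⟪c v x, y⟫ = -⟪x, c v y⟫ := fun v =>
    LinearMap.inner_map_eq_neg_inner_of_adjoint_eq_neg (hskew v)
  have hnorms : ‖t₁‖ * ‖h‖ = ‖t₂‖ * ‖h'‖ := by
    have := norm_mul_norm_eq_of_clifford_apply_add_eq_zero hClif hskew' heq
    rwa [norm_clifford_apply hClif hskew', norm_clifford_apply hClif hskew', hu, mul_one,
      mul_one] at this
  have hh_norm : ‖h‖ ≠ 0 := norm_ne_zero_iff.mpr hh
  have hhu : c h u ≠ 0 := by
    rw [← norm_ne_zero_iff, norm_clifford_apply hClif hskew', hu, mul_one]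
    exact hh_norm
  have hhu_perp : ⟪c h u, c h' u⟫ = 0 := by
    rw [inner_clifford_apply_apply hClif hskew', hortho, zero_mul]
  refine ⟨hnorms, mul_right_cancel₀ hh_norm (hnorm ▸ hnorms), ?_⟩
  exact inner_eq_zero_of_clifford_apply_add_eq_zero hClif hskew' heq hhu_perp hhu
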